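/- arXiv:2104.10799 — 3 statements merged into one kernel-verified Lean document; each statement's English description precedes it below -/
import Mathlib

section
/- Let d ≥ 2 be a natural number and let X = (X_1, …, X_d) be a Latin hypercube sample of N = d points in [0,1)^d. Then the D^2_0-correlation number satisfies γ_{D^2_0}(X) ≥ 2 when d = 2. -/
open MeasureTheory ProbabilityTheory Filter
open scoped ENNReal Classical

namespace LHSPaper

/-- The anchored box `[0,a) = ∏_i [0, a_i)` in `[0,1)^d`. -/
def anchoredBox {d : ℕ} (a : Fin d → ℝ) : Set (Fin d → ℝ) := {x | ∀ i, x i ∈ Set.Ico 0 (a i)}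

/-- `C^d_0`, the collection of anchored boxes `[0,a)` with `a ∈ [0,1]^d`. -/
def anchoredBoxes (d : ℕ) : Set (Set (Fin d → ℝ)) :=
  {S | ∃ a : Fin d → ℝ, (∀ i, a i ∈ Set.Icc (0 : ℝ) 1) ∧ S = anchoredBox a}

/-- `D^d_0`, the collection of differences `B \ A` of anchored boxes. -/
def boxDiffs (d : ℕ) : Set (Set (Fin d → ℝ)) :=
  {S | ∃ A ∈ anchoredBoxes d, ∃ B ∈ anchoredBoxes d, S = B \ A}

/-- The half-open unit cube `[0,1)^d`. -/
def unitCube (d : ℕ) : Set (Fin d → ℝ) := {x | ∀ i, x i ∈ Set.Ico (0 : ℝ) 1}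

/-- `γ`-negative dependence of the indicators of the events `A 1, …, A N`. -/
def GammaNegDep {Ω : Type*} [MeasurableSpace Ω] (μ : Measure Ω) {N : ℕ}
    (γ : ℝ≥0∞) (A : Fin N → Set Ω) : Prop :=
  ∀ J : Finset (Fin N), J.Nonempty →
    μ (⋂ j ∈ J, A j) ≤ γ * ∏ j ∈ J, μ (A j) ∧
    μ (⋂ j ∈ J, (A j)ᶜ) ≤ γ * ∏ j ∈ J, μ (A j)ᶜ

/-- The `𝒮`-correlation number of a random point tuple `X`. -/
noncomputable def corrNum {Ω : Type*} [MeasurableSpace Ω] (μ : Measure Ω) {N d : ℕ}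
    (𝒮 : Set (Set (Fin d → ℝ))) (X : Fin N → Ω → Fin d → ℝ) : ℝ≥0∞ :=
  ⨆ (S : Set (Fin d → ℝ)) (_ : S ∈ 𝒮) (J : Finset (Fin N)) (_ : J.Nonempty),
    max (μ (⋂ j ∈ J, {ω | X j ω ∈ S}) / ∏ j ∈ J, μ {ω | X j ω ∈ S})
        (μ (⋂ j ∈ J, {ω | X j ω ∉ S}) / ∏ j ∈ J, μ {ω | X j ω ∉ S})

instance (N : ℕ) : MeasurableSpace (Equiv.Perm (Fin N)) := ⊤

instance (N : ℕ) : Nonempty (Equiv.Perm (Fin N)) := ⟨Equiv.refl _⟩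

/-- Value types of the sources of randomness of a Latin hypercube sample:
`d` random permutations and `N·d` random reals. -/
def lhsβ (d N : ℕ) : (Fin d ⊕ (Fin N × Fin d)) → Type :=
  fun i => Sum.elim (fun _ => Equiv.Perm (Fin N)) (fun _ => ℝ) i

noncomputable def lhsMS (d N : ℕ) : (i : Fin d ⊕ (Fin N × Fin d)) → MeasurableSpace (lhsβ d N i) :=
  fun i => match i with
  | .inl _ => ⊤
  | .inr _ => inferInstanceAs (MeasurableSpace ℝ)

def lhsFun {Ω : Type*} {d N : ℕ} (π : Fin d → Ω → Equiv.Perm (Fin N))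
    (U : Fin N → Ω → Fin d → ℝ) : (i : Fin d ⊕ (Fin N × Fin d)) → Ω → lhsβ d N i :=
  fun i => match i with
  | .inl j => π j
  | .inr p => fun ω => U p.1 ω p.2

/-- `X` is a Latin hypercube sample of `N` points in `[0,1)^d`, built from the
uniformly distributed random permutations `π_j` and the uniformly distributed
random variables `U_{n,j}`, all mutually independent. -/
def IsLHS {Ω : Type*} [MeasurableSpace Ω] (μ : Measure Ω) (d N : ℕ)
    (X : Fin N → Ω → Fin d → ℝ)
    (π : Fin d → Ω → Equiv.Perm (Fin N)) (U : Fin N → Ω → Fin d → ℝ) : Prop :=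
  (∀ j, Measure.map (π j) μ = (PMF.uniformOfFintype (Equiv.Perm (Fin N))).toMeasure) ∧
  (∀ n j, Measure.map (fun ω => U n ω j) μ = volume.restrict (Set.Ico (0 : ℝ) 1)) ∧
  iIndepFun (m := lhsMS d N) (lhsFun π U) μ ∧
  (∀ n j ω, X n ω j = (((π j ω) n : ℕ) + U n ω j) / N)

/-- An elementary interval in base `b` of order `k` in `[0,1)^d`. -/
def IsElemInterval (b d k : ℕ) (E : Set (Fin d → ℝ)) : Prop :=
  ∃ ℓ : Fin d → ℕ, ∃ a : Fin d → ℕ, (∀ i, a i < b ^ ℓ i) ∧ (∑ i, ℓ i = k) ∧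
    E = {x | ∀ i, x i ∈ Set.Ico ((a i : ℝ) / b ^ ℓ i) (((a i : ℝ) + 1) / b ^ ℓ i)}

/-- A `(t,m,d)`-net in base `b`: `b^m` points in `[0,1)^d` such that every elementary
interval of order `m - t` contains exactly `b^t` points (with multiplicity). -/
def IsNet (b d m t : ℕ) (P : Fin (b ^ m) → Fin d → ℝ) : Prop :=
  (∀ n, P n ∈ unitCube d) ∧
  ∀ E : Set (Fin d → ℝ), IsElemInterval b d (m - t) E →
    (Finset.univ.filter fun n => P n ∈ E).card = b ^ t

/-- A `b`-ary scrambling of depth `ℓ`: a self-map of `[0,1)` mapping, for each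
`k ∈ {1,…,ℓ}`, elementary intervals of order `k` into elementary intervals of order `k`,
distinct ones into distinct ones. -/
def IsScrambling (b ℓ : ℕ) (σ : ℝ → ℝ) : Prop :=
  (∀ x ∈ Set.Ico (0 : ℝ) 1, σ x ∈ Set.Ico (0 : ℝ) 1) ∧
  ∀ k, 1 ≤ k → k ≤ ℓ → ∃ f : ℕ → ℕ,
    (∀ a < b ^ k, f a < b ^ k) ∧
    (∀ a < b ^ k, ∀ a' < b ^ k, a ≠ a' → f a ≠ f a') ∧
    (∀ a < b ^ k, ∀ x ∈ Set.Ico ((a : ℝ) / b ^ k) (((a : ℝ) + 1) / b ^ k),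
      σ x ∈ Set.Ico ((f a : ℝ) / b ^ k) (((f a : ℝ) + 1) / b ^ k))

/-- A basic cube of an abstract scrambled `(t,m,d)`-net in base `b`. -/
def IsBasicCube (b d m t : ℕ) (C : Set (Fin d → ℝ)) : Prop :=
  ∃ k : Fin d → ℕ, (∀ j, k j < b ^ (m - t)) ∧
    C = {x | ∀ j, x j ∈ Set.Ico ((k j : ℝ) / b ^ (m - t)) (((k j : ℝ) + 1) / b ^ (m - t))}

/-- An abstract scrambled `(t,m,d)`-net in base `b`. -/
def IsAbstractScrambledNet {Ω : Type*} [MeasurableSpace Ω] (μ : Measure Ω)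
    (b d m t : ℕ) (Y : Fin (b ^ m) → Ω → (Fin d → ℝ)) : Prop :=
  (∀ᵐ ω ∂μ, IsNet b d m t fun n => Y n ω) ∧
  (∀ i C, IsBasicCube b d m t C → μ {ω | Y i ω ∈ C} = ((b : ℝ≥0∞) ^ (d * (m - t)))⁻¹) ∧
  (∀ M : Set (Fin d → ℝ), MeasurableSet M →
    ∀ J : Finset (Fin (b ^ m)), J.Nonempty →
    ∀ C : Fin (b ^ m) → Set (Fin d → ℝ), (∀ j ∈ J, IsBasicCube b d m t (C j)) →
      μ (⋂ j ∈ J, {ω | Y j ω ∈ C j}) ≠ 0 →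
      (μ[|⋂ j ∈ J, {ω | Y j ω ∈ C j}]) (⋂ j ∈ J, {ω | Y j ω ∈ M}) =
        ∏ j ∈ J, volume (M ∩ C j) / volume (C j))

/-!
With two points, in every coordinate one point lies in `[0,1/2)` and the other in `[1/2,1)`.
Take `S = [0,1/2+δ)² \ [0,1/2)²`. Each point is uniform on the square, so
`P(X_n ∈ S) = (1/2+δ)² - 1/4 = δ(1+δ)`. Both points lie in `S` only if `π_1 ≠ π_2` (otherwise one
of them sits in `[0,1/2)²`), and then each point has exactly one coordinate in `[1/2,1)`, which
must fall below `1/2+δ`; hence `P(X_1 ∈ S, X_2 ∈ S) = 2δ²`. The ratio `2/(1+δ)²` tends to `2`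
as `δ → 0`.
-/

open scoped Nat Topology
open Equiv (Perm)

theorem le_corrNum {Ω : Type*} [MeasurableSpace Ω] (μ : Measure Ω) {N d : ℕ}
    {𝒮 : Set (Set (Fin d → ℝ))} (X : Fin N → Ω → Fin d → ℝ) {S : Set (Fin d → ℝ)} (hS : S ∈ 𝒮)
    {J : Finset (Fin N)} (hJ : J.Nonempty) :
    μ (⋂ j ∈ J, {ω | X j ω ∈ S}) / ∏ j ∈ J, μ {ω | X j ω ∈ S} ≤ corrNum μ 𝒮 X :=
  le_iSup₂_of_le S hS (le_iSup₂_of_le J hJ (le_max_left _ _))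

section LHS

variable {Ω : Type*} [MeasurableSpace Ω] {μ : Measure Ω} {d N : ℕ}
  {X : Fin N → Ω → Fin d → ℝ} {π : Fin d → Ω → Perm (Fin N)} {U : Fin N → Ω → Fin d → ℝ}

namespace IsLHS

theorem aemeasurable_perm (h : IsLHS μ d N X π U) (j : Fin d) : AEMeasurable (π j) μ := by
  by_contra hπ
  have h0 := Measure.map_of_not_aemeasurable hπ
  rw [h.1 j] at h0
  exact IsProbabilityMeasure.ne_zero _ h0

theorem aemeasurable_coord (h : IsLHS μ d N X π U) (n : Fin N) (j : Fin d) :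
    AEMeasurable (fun ω => U n ω j) μ := by
  by_contra hU
  have h0 := Measure.map_of_not_aemeasurable hU
  rw [h.2.1 n j] at h0
  have : volume.restrict (Set.Ico (0 : ℝ) 1) Set.univ = 1 := by simp
  simp [h0] at this

theorem aemeasurable_point (h : IsLHS μ d N X π U) (n : Fin N) : AEMeasurable (X n) μ := by
  have hX : X n = fun ω j => (((π j ω) n : ℕ) + U n ω j) / N := by
    funext ω j
    exact h.2.2.2 n j ω
  rw [hX]
  refine aemeasurable_pi_lambda _ fun j => ?_
  have hπ : Measurable fun σ : Perm (Fin N) => ((σ n : ℕ) : ℝ) := measurable_from_top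
  exact ((hπ.comp_aemeasurable (h.aemeasurable_perm j)).add (h.aemeasurable_coord n j)).div_const _

theorem ae_coord_mem_Ico (h : IsLHS μ d N X π U) :
    ∀ᵐ ω ∂μ, ∀ n j, U n ω j ∈ Set.Ico (0 : ℝ) 1 := by
  simp only [ae_all_iff]
  intro n j
  refine ae_of_ae_map (p := (· ∈ Set.Ico (0 : ℝ) 1)) (h.aemeasurable_coord n j) ?_
  rw [h.2.1 n j]
  exact ae_restrict_mem measurableSet_Ico

theorem measure_perm_eq (h : IsLHS μ d N X π U) (j : Fin d) (σ : Perm (Fin N)) :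
    μ (π j ⁻¹' {σ}) = ((N ! : ℕ) : ℝ≥0∞)⁻¹ := by
  rw [← Measure.map_apply_of_aemeasurable (h.aemeasurable_perm j) (by trivial), h.1 j,
    PMF.toMeasure_apply_singleton _ _ (by trivial), PMF.uniformOfFintype_apply, Fintype.card_perm,
    Fintype.card_fin]

theorem measure_coord_lt (h : IsLHS μ d N X π U) (n : Fin N) (j : Fin d) (a : ℝ) :
    μ ((fun ω => U n ω j) ⁻¹' Set.Iio a) = ENNReal.ofReal (min a 1) := by
  rw [← Measure.map_apply_of_aemeasurable (h.aemeasurable_coord n j) measurableSet_Iio, h.2.1 n j,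
    Measure.restrict_apply measurableSet_Iio, Set.inter_comm, Set.Ico_inter_Iio, Real.volume_Ico,
    sub_zero, min_comm]

theorem measure_perm_eq_coord_lt (h : IsLHS μ d N X π U) (P : Fin d → Perm (Fin N))
    (a : Fin N → Fin d → ℝ) :
    μ {ω | (∀ j, π j ω = P j) ∧ ∀ n j, U n ω j < a n j} =
      ((N ! : ℕ) : ℝ≥0∞)⁻¹ ^ d * ∏ n, ∏ j, ENNReal.ofReal (min (a n j) 1) := by
  let s : (i : Fin d ⊕ (Fin N × Fin d)) → Set (lhsβ d N i) := fun i =>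
    match i with
    | .inl j => {P j}
    | .inr p => (Set.Iio (a p.1 p.2) : Set ℝ)
  have hset : {ω | (∀ j, π j ω = P j) ∧ ∀ n j, U n ω j < a n j} =
      ⋂ i, lhsFun π U i ⁻¹' s i := by
    ext ω
    simp only [Set.mem_iInter, Sum.forall, Prod.forall]
    exact Iff.rfl
  have hmeas : ∀ i, MeasurableSet[(lhsMS d N i).comap (lhsFun π U i)] (lhsFun π U i ⁻¹' s i) := by
    rintro (j | ⟨n, j⟩)
    · exact ⟨{P j}, trivial, rfl⟩
    · exact ⟨(Set.Iio (a n j) : Set ℝ), (measurableSet_Iio : MeasurableSet (Set.Iio (a n j))), rfl⟩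
  rw [hset, h.2.2.1.meas_iInter hmeas, Fintype.prod_sum_type]
  change (∏ j, μ (π j ⁻¹' {P j})) *
    ∏ p : Fin N × Fin d, μ ((fun ω => U p.1 ω p.2) ⁻¹' Set.Iio (a p.1 p.2)) = _
  simp_rw [h.measure_perm_eq, h.measure_coord_lt, Fintype.prod_prod_type, Finset.prod_const,
    Finset.card_univ, Fintype.card_fin]

theorem measure_perm_mem_coord_lt (h : IsLHS μ d N X π U) (A : Finset (Fin d → Perm (Fin N)))
    (a : (Fin d → Perm (Fin N)) → Fin N → Fin d → ℝ) :
    μ {ω | (fun j => π j ω) ∈ A ∧ ∀ n j, U n ω j < a (fun j => π j ω) n j} =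
      ∑ P ∈ A, ((N ! : ℕ) : ℝ≥0∞)⁻¹ ^ d * ∏ n, ∏ j, ENNReal.ofReal (min (a P n j) 1) := by
  have hset : {ω | (fun j => π j ω) ∈ A ∧ ∀ n j, U n ω j < a (fun j => π j ω) n j} =
      ⋃ P ∈ A, {ω | (∀ j, π j ω = P j) ∧ ∀ n j, U n ω j < a P n j} := by
    ext ω
    simp only [Set.mem_ofPred_eq, Set.mem_iUnion, exists_prop]
    constructor
    · exact fun hω => ⟨_, hω.1, fun _ => rfl, hω.2⟩
    · rintro ⟨P, hP, hπ, hU⟩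
      obtain rfl : (fun j => π j ω) = P := funext hπ
      exact ⟨hP, hU⟩
  rw [hset, measure_biUnion_finset₀]
  · exact Finset.sum_congr rfl fun P _ => h.measure_perm_eq_coord_lt P (a P)
  · intro P _ Q _ hPQ
    refine Disjoint.aedisjoint (Set.disjoint_left.2 fun ω hP hQ => hPQ ?_)
    exact funext fun j => (hP.1 j).symm.trans (hQ.1 j)
  · intro P _
    simp only [Set.ofPred_and, Set.ofPred_forall]
    refine .inter (.iInter fun j => ?_) (.iInter fun n => .iInter fun j => ?_)
    · exact (h.aemeasurable_perm j).nullMeasurableSet_preimage (s := {P j}) (by trivial)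
    · exact nullMeasurableSet_lt (h.aemeasurable_coord n j) aemeasurable_const

theorem mem_anchoredBox_iff (h : IsLHS μ d N X π U) {n : Fin N} {ω : Ω}
    (hU : ∀ j, 0 ≤ U n ω j) (t : Fin d → ℝ) :
    X n ω ∈ anchoredBox t ↔ ∀ j, U n ω j < N * t j - (π j ω n : ℕ) := by
  have hN : (0 : ℝ) < N := Nat.cast_pos.2 n.pos
  simp only [anchoredBox, Set.mem_ofPred_eq, Set.mem_Ico, h.2.2.2, div_lt_iff₀ hN]
  refine forall_congr' fun j => ⟨fun hj => by linarith [hj.2], fun hj => ⟨?_, by linarith⟩⟩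
  have := hU j
  positivity

end IsLHS

end LHS

theorem sum_perm_fin_two_apply {M : Type*} [AddCommMonoid M] (f : Fin 2 → M) (m : Fin 2) :
    ∑ σ : Perm (Fin 2), f (σ m) = ∑ k, f k :=
  Fintype.sum_bijective (fun σ => σ m) (by fin_cases m <;> decide) _ _ fun _ => rfl

theorem sum_ofReal_min_two_mul_sub {t : ℝ} (ht : t ∈ Set.Icc (0 : ℝ) 1) :
    ∑ k : Fin 2, ENNReal.ofReal (min (2 * t - (k : ℕ)) 1) = ENNReal.ofReal (2 * t) := by
  obtain ⟨ht0, ht1⟩ := ht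
  simp only [Fin.sum_univ_two, Fin.val_zero, Fin.val_one, Nat.cast_zero, Nat.cast_one, sub_zero]
  rcases le_total t (1 / 2) with hle | hge
  · rw [min_eq_left (by linarith),
      ENNReal.ofReal_of_nonpos (p := min (2 * t - 1) 1) (min_le_of_left_le (by linarith)), add_zero]
  · rw [min_eq_right (by linarith), min_eq_left (by linarith), ← ENNReal.ofReal_add zero_le_one
      (by linarith)]
    ring_nf

theorem lt_two_mul_half_sub_iff {u : ℝ} (hu : u ∈ Set.Ico (0 : ℝ) 1) (k : Fin 2) :
    u < 2 * (1 / 2) - (k : ℕ) ↔ k = 0 := by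
  obtain ⟨hu0, hu1⟩ := hu
  fin_cases k <;> simp <;> linarith

theorem measurableSet_anchoredBox {d : ℕ} (t : Fin d → ℝ) : MeasurableSet (anchoredBox t) := by
  have : anchoredBox t = Set.univ.pi fun j => Set.Ico 0 (t j) := by
    ext x
    simp [anchoredBox]
  exact this ▸ MeasurableSet.univ_pi fun _ => measurableSet_Ico

def boxShell (d : ℕ) (δ : ℝ) : Set (Fin d → ℝ) :=
  anchoredBox (fun _ => 1 / 2 + δ) \ anchoredBox (fun _ => 1 / 2)

theorem boxShell_mem_boxDiffs {d : ℕ} {δ : ℝ} (hδ0 : 0 ≤ δ) (hδ1 : δ ≤ 1 / 2) :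
    boxShell d δ ∈ boxDiffs d :=
  ⟨_, ⟨_, fun _ => ⟨by norm_num, by norm_num⟩, rfl⟩,
    _, ⟨_, fun _ => ⟨by linarith, by linarith⟩, rfl⟩, rfl⟩

section TwoPoints

variable {Ω : Type*} [MeasurableSpace Ω] {μ : Measure Ω} {d : ℕ}
  {X : Fin 2 → Ω → Fin d → ℝ} {π : Fin d → Ω → Perm (Fin 2)} {U : Fin 2 → Ω → Fin d → ℝ}

namespace IsLHS

theorem measure_mem_anchoredBox (h : IsLHS μ d 2 X π U) (m : Fin 2) {t : Fin d → ℝ}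
    (ht : ∀ j, t j ∈ Set.Icc (0 : ℝ) 1) :
    μ {ω | X m ω ∈ anchoredBox t} = ∏ j, ENNReal.ofReal (t j) := by
  let a : (Fin d → Perm (Fin 2)) → Fin 2 → Fin d → ℝ := fun P n j =>
    if n = m then 2 * t j - (P j n : ℕ) else 1
  have hae : {ω | X m ω ∈ anchoredBox t} =ᵐ[μ]
      {ω | (fun j => π j ω) ∈ Finset.univ ∧ ∀ n j, U n ω j < a (fun j => π j ω) n j} := by
    rw [Filter.eventuallyEq_set]
    filter_upwards [h.ae_coord_mem_Ico] with ω hU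
    simp only [Finset.mem_univ, true_and,
      h.mem_anchoredBox_iff (fun j => (hU m j).1), Nat.cast_ofNat, a]
    refine ⟨fun hm n j => ?_, fun hm j => by simpa using hm m j⟩
    split_ifs with hn
    · exact hn ▸ hm j
    · exact (hU n j).2
  have hfactor : ∀ P : Fin d → Perm (Fin 2),
      ((2 ! : ℕ) : ℝ≥0∞)⁻¹ ^ d * ∏ n, ∏ j, ENNReal.ofReal (min (a P n j) 1) =
        ∏ j, 2⁻¹ * ENNReal.ofReal (min (2 * t j - (P j m : ℕ)) 1) := by
    intro P
    rw [Fintype.prod_eq_single m fun n hn => by simp [a, hn], Finset.prod_mul_distrib]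
    simp [a]
  rw [measure_congr hae, h.measure_perm_mem_coord_lt, Finset.sum_congr rfl fun P _ => hfactor P,
    ← Fintype.prod_sum fun j (σ : Perm (Fin 2)) =>
      2⁻¹ * ENNReal.ofReal (min (2 * t j - (σ m : ℕ)) 1)]
  refine Finset.prod_congr rfl fun j _ => ?_
  rw [← Finset.mul_sum,
    sum_perm_fin_two_apply (fun k => ENNReal.ofReal (min (2 * t j - (k : ℕ)) 1)),
    sum_ofReal_min_two_mul_sub (ht j), ENNReal.ofReal_mul zero_le_two, ← mul_assoc]
  simp [ENNReal.inv_mul_cancel]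

theorem measure_mem_boxShell (h : IsLHS μ d 2 X π U) (m : Fin 2) {δ : ℝ} (hδ0 : 0 ≤ δ)
    (hδ1 : δ ≤ 1 / 2) :
    μ {ω | X m ω ∈ boxShell d δ} = ENNReal.ofReal ((1 / 2 + δ) ^ d - (1 / 2) ^ d) := by
  have hsub : {ω | X m ω ∈ anchoredBox (fun _ => (1 / 2 : ℝ))} ⊆
      {ω | X m ω ∈ anchoredBox (fun _ => 1 / 2 + δ)} := fun ω hω j =>
    ⟨(hω j).1, by linarith [(hω j).2]⟩
  have hnull : NullMeasurableSet {ω | X m ω ∈ anchoredBox (fun _ => (1 / 2 : ℝ))} μ := by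
    refine (h.aemeasurable_point m).nullMeasurableSet_preimage ?_
    exact measurableSet_anchoredBox _
  have hA := h.measure_mem_anchoredBox m (t := fun _ => 1 / 2) fun _ => ⟨by norm_num, by norm_num⟩
  have hB := h.measure_mem_anchoredBox m (t := fun _ => 1 / 2 + δ) fun _ =>
    ⟨by linarith, by linarith⟩
  simp only [Finset.prod_const, Finset.card_univ, Fintype.card_fin, ← ENNReal.ofReal_pow
    (by linarith : (0 : ℝ) ≤ 1 / 2 + δ), ← ENNReal.ofReal_pow (by norm_num : (0 : ℝ) ≤ 1 / 2)]
    at hA hB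
  change μ ({ω | X m ω ∈ anchoredBox _} \ {ω | X m ω ∈ anchoredBox _}) = _
  rw [measure_sdiff hsub hnull (hA ▸ ENNReal.ofReal_ne_top), hA, hB,
    ENNReal.ofReal_sub _ (by positivity)]

theorem mem_boxShell_iff (h : IsLHS μ d 2 X π U) {n : Fin 2} {ω : Ω}
    (hU : ∀ j, U n ω j ∈ Set.Ico (0 : ℝ) 1) (δ : ℝ) :
    X n ω ∈ boxShell d δ ↔
      (∀ j, U n ω j < 2 * (1 / 2 + δ) - (π j ω n : ℕ)) ∧ ∃ j, π j ω n ≠ 0 := by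
  simp only [boxShell, Set.mem_sdiff, h.mem_anchoredBox_iff (fun j => (hU j).1), Nat.cast_ofNat,
    lt_two_mul_half_sub_iff (hU _), not_forall]

end IsLHS

end TwoPoints

section TwoPointsSquare

variable {Ω : Type*} [MeasurableSpace Ω] {μ : Measure Ω}
  {X : Fin 2 → Ω → Fin 2 → ℝ} {π : Fin 2 → Ω → Perm (Fin 2)} {U : Fin 2 → Ω → Fin 2 → ℝ}

namespace IsLHS

theorem measure_mem_boxShell_inter (h : IsLHS μ 2 2 X π U) {δ : ℝ} (hδ0 : 0 ≤ δ) (hδ1 : δ ≤ 1 / 2) :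
    μ ({ω | X 0 ω ∈ boxShell 2 δ} ∩ {ω | X 1 ω ∈ boxShell 2 δ}) = ENNReal.ofReal (2 * δ ^ 2) := by
  let A := Finset.univ.filter fun P : Fin 2 → Perm (Fin 2) => ∀ n, ∃ j, P j n ≠ 0
  let a : (Fin 2 → Perm (Fin 2)) → Fin 2 → Fin 2 → ℝ := fun P n j =>
    2 * (1 / 2 + δ) - (P j n : ℕ)
  have hae : ({ω | X 0 ω ∈ boxShell 2 δ} ∩ {ω | X 1 ω ∈ boxShell 2 δ} : Set Ω) =ᵐ[μ]
      {ω | (fun j => π j ω) ∈ A ∧ ∀ n j, U n ω j < a (fun j => π j ω) n j} := by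
    rw [Filter.eventuallyEq_set]
    filter_upwards [h.ae_coord_mem_Ico] with ω hU
    simp only [Set.mem_inter_iff, Set.mem_ofPred_eq, h.mem_boxShell_iff (hU _), A, a,
      Finset.mem_filter, Finset.mem_univ, true_and, Fin.forall_fin_two]
    tauto
  -- `P j` is a bijection of `Fin 2`: each `j` contributes one factor `1` and one factor `2δ`
  have hprod : ∀ P : Fin 2 → Perm (Fin 2),
      ∏ n, ∏ j, ENNReal.ofReal (min (a P n j) 1) = ENNReal.ofReal (2 * δ) ^ 2 := by
    intro P
    rw [Finset.prod_comm]
    simp_rw [a, Equiv.prod_comp (P _) fun k => ENNReal.ofReal (min (2 * (1 / 2 + δ) - (k : ℕ)) 1)]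
    simp only [Fin.prod_univ_two, Finset.prod_const, Finset.card_univ, Fintype.card_fin,
      Fin.val_zero, Fin.val_one, Nat.cast_zero, Nat.cast_one, sub_zero]
    rw [min_eq_right (by linarith), min_eq_left (by linarith), ENNReal.ofReal_one, one_mul]
    ring_nf
  have hcard : A.card = 2 := by decide
  rw [measure_congr hae, h.measure_perm_mem_coord_lt, Finset.sum_congr rfl fun P _ => by rw [hprod],
    Finset.sum_const, hcard, nsmul_eq_mul]
  have hinv : ((2 ! : ℕ) : ℝ≥0∞)⁻¹ = ENNReal.ofReal 2⁻¹ := by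
    rw [ENNReal.ofReal_inv_of_pos two_pos]
    simp
  rw [hinv, ← ENNReal.ofReal_pow (by norm_num), ← ENNReal.ofReal_pow (by positivity),
    ← ENNReal.ofReal_mul (by positivity), ← ENNReal.ofReal_natCast,
    ← ENNReal.ofReal_mul (by positivity)]
  ring_nf

theorem ofReal_two_div_le_corrNum (h : IsLHS μ 2 2 X π U) {δ : ℝ} (hδ0 : 0 < δ) (hδ1 : δ ≤ 1 / 2) :
    ENNReal.ofReal (2 / (1 + δ) ^ 2) ≤ corrNum μ (boxDiffs 2) X := by
  have hratio := le_corrNum μ X (boxShell_mem_boxDiffs hδ0.le hδ1) Finset.univ_nonempty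
  have hinter : ⋂ j ∈ Finset.univ, {ω | X j ω ∈ boxShell 2 δ} =
      {ω | X 0 ω ∈ boxShell 2 δ} ∩ {ω | X 1 ω ∈ boxShell 2 δ} := by
    ext ω
    simp [Fin.forall_fin_two]
  have hshell : (1 / 2 + δ) ^ 2 - (1 / 2) ^ 2 = δ * (1 + δ) := by ring
  rw [hinter, Fin.prod_univ_two, h.measure_mem_boxShell_inter hδ0.le hδ1,
    h.measure_mem_boxShell 0 hδ0.le hδ1, h.measure_mem_boxShell 1 hδ0.le hδ1, hshell,
    ← ENNReal.ofReal_mul (by positivity), ← ENNReal.ofReal_div_of_pos (by positivity)] at hratio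
  refine le_of_eq_of_le ?_ hratio
  congr 1
  field_simp

end IsLHS

end TwoPointsSquare

theorem stmt0_general {Ω : Type*} [MeasurableSpace Ω] (μ : Measure Ω)
    (X : Fin 2 → Ω → Fin 2 → ℝ) (π : Fin 2 → Ω → Equiv.Perm (Fin 2))
    (U : Fin 2 → Ω → Fin 2 → ℝ) (h : IsLHS μ 2 2 X π U) :
    (2 : ℝ≥0∞) ≤ corrNum μ (boxDiffs 2) X := by
  have hcont : ContinuousAt (fun δ : ℝ => 2 / (1 + δ) ^ 2) 0 := by fun_prop (disch := norm_num)
  have hlim : Tendsto (fun δ : ℝ => ENNReal.ofReal (2 / (1 + δ) ^ 2)) (𝓝[>] 0) (𝓝 2) := by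
    simpa using (ENNReal.tendsto_ofReal hcont.tendsto).mono_left nhdsWithin_le_nhds
  refine le_of_tendsto hlim ?_
  filter_upwards [Ioo_mem_nhdsGT (by norm_num : (0 : ℝ) < 1 / 2)] with δ hδ
  exact h.ofReal_two_div_le_corrNum hδ.1 hδ.2.le

/-- For a Latin hypercube sample of `N = 2` points in `[0,1)^2`,
the `D^2_0`-correlation number is at least `2`. -/
theorem stmt0 {Ω : Type*} [MeasurableSpace Ω] (μ : Measure Ω) [IsProbabilityMeasure μ]
    (X : Fin 2 → Ω → Fin 2 → ℝ) (π : Fin 2 → Ω → Equiv.Perm (Fin 2))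
    (U : Fin 2 → Ω → Fin 2 → ℝ) (h : IsLHS μ 2 2 X π U) :
    (2 : ℝ≥0∞) ≤ corrNum μ (boxDiffs 2) X :=
  stmt0_general μ X π U h

end LHSPaper
end

section
/- Let b, d ≥ 2 and m ≥ t ≥ 0 be integers, let P = (p^{(n)})_{n=1}^{b^m} be a (t,m,d)-net in base b, and let σ_1, …, σ_d : [0,1) → [0,1) be b-ary scramblings of depth m−t. Then the point family σ(P) = (σ(p^{(n)}))_{n=1}^{b^m}, where σ(p) = (σ_1(p_1), …, σ_d(p_d)), is again a (t,m,d)-net in base b. -/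
/-!
A scrambling of depth `m - t` permutes the one-dimensional elementary intervals of each order
`k ≤ m - t`, so within `[0,1)` the preimage under `σ_i` of such an interval is again one of the
same order. Hence the preimage of an elementary interval `E` of order `m - t` under `σ` is an
elementary interval `E'` of the same order, and `σ(P)` has as many points in `E` as `P` has in `E'`.
-/

open MeasureTheory ProbabilityTheory Filter
open scoped ENNReal Classical

namespace LHSPaper

def baseInterval (b k a : ℕ) : Set ℝ := Set.Ico ((a : ℝ) / b ^ k) (((a : ℝ) + 1) / b ^ k)

lemma mem_baseInterval_iff_floor {b k a : ℕ} (hb : 0 < b ^ k) {x : ℝ} (hx : 0 ≤ x) :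
    x ∈ baseInterval b k a ↔ ⌊x * b ^ k⌋₊ = a := by
  have hB : (0 : ℝ) < b ^ k := by exact_mod_cast hb
  rw [Nat.floor_eq_iff (mul_nonneg hx hB.le), baseInterval, Set.mem_Ico, div_le_iff₀ hB,
    lt_div_iff₀ hB]

lemma exists_lt_mem_baseInterval {b k : ℕ} (hb : 0 < b ^ k) {x : ℝ} (hx : x ∈ Set.Ico 0 1) :
    ∃ a < b ^ k, x ∈ baseInterval b k a := by
  refine ⟨⌊x * b ^ k⌋₊, ?_, (mem_baseInterval_iff_floor hb hx.1).2 rfl⟩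
  have hB : (0 : ℝ) < b ^ k := by exact_mod_cast hb
  rw [Nat.floor_lt (mul_nonneg hx.1 hB.le), Nat.cast_pow]
  exact mul_lt_of_lt_one_left hB hx.2

lemma eq_of_mem_baseInterval {b k a a' : ℕ} (hb : 0 < b ^ k) {x : ℝ} (hx : 0 ≤ x)
    (ha : x ∈ baseInterval b k a) (ha' : x ∈ baseInterval b k a') : a = a' :=
  ((mem_baseInterval_iff_floor hb hx).1 ha).symm.trans ((mem_baseInterval_iff_floor hb hx).1 ha')

lemma IsScrambling.exists_preimage_baseInterval {b L k a : ℕ} {σ : ℝ → ℝ}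
    (hσ : IsScrambling b L σ) (hk : k ≤ L) (ha : a < b ^ k) :
    ∃ c < b ^ k, ∀ x ∈ Set.Ico (0 : ℝ) 1,
      σ x ∈ baseInterval b k a ↔ x ∈ baseInterval b k c := by
  have hb : 0 < b ^ k := by omega
  rcases Nat.eq_zero_or_pos k with rfl | hk₀
  · obtain rfl : a = 0 := by simpa using ha
    refine ⟨0, hb, fun x hx => ?_⟩
    simp only [baseInterval, pow_zero, Nat.cast_zero, zero_add, div_one]
    exact ⟨fun _ => hx, fun _ => hσ.1 x hx⟩
  obtain ⟨f, hf_lt, hf_inj, hf_maps⟩ := hσ.2 k hk₀ hk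
  obtain ⟨c, hc, hfc⟩ : ∃ c < b ^ k, f c = a := by
    obtain ⟨c, hc, hfc⟩ := Finset.surjOn_of_injOn_of_card_le (s := Finset.range (b ^ k))
      (t := Finset.range (b ^ k)) f
      (fun c hc => Finset.mem_range.2 (hf_lt c (Finset.mem_range.1 hc)))
      (fun c hc c' hc' => not_imp_not.1 (hf_inj c (Finset.mem_range.1 hc) c'
        (Finset.mem_range.1 hc')))
      le_rfl (Finset.mem_range.2 ha)
    exact ⟨c, Finset.mem_range.1 hc, hfc⟩
  refine ⟨c, hc, fun x hx => ⟨fun hσx => ?_, fun hxc => hfc ▸ hf_maps c hc x hxc⟩⟩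
  obtain ⟨c', hc', hxc'⟩ := exists_lt_mem_baseInterval hb hx
  have hfc' : f c' = f c :=
    hfc ▸ eq_of_mem_baseInterval hb (hσ.1 x hx).1 (hf_maps c' hc' x hxc') hσx
  obtain rfl : c' = c := by_contra fun hne => hf_inj c' hc' c hc hne hfc'
  exact hxc'

theorem stmt9_general (b d m t : ℕ)
    (P : Fin (b ^ m) → Fin d → ℝ) (hP : IsNet b d m t P)
    (σ : Fin d → ℝ → ℝ) (hσ : ∀ i, IsScrambling b (m - t) (σ i)) :
    IsNet b d m t (fun n i => σ i (P n i)) := by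
  obtain ⟨hP_cube, hP_count⟩ := hP
  refine ⟨fun n i => (hσ i).1 _ (hP_cube n i), ?_⟩
  rintro _ ⟨ℓ, a, ha, hℓ, rfl⟩
  have hℓ_le : ∀ i, ℓ i ≤ m - t := fun i =>
    hℓ ▸ Finset.single_le_sum (fun _ _ => Nat.zero_le _) (Finset.mem_univ i)
  choose c hc hpre using fun i => (hσ i).exists_preimage_baseInterval (hℓ_le i) (ha i)
  rw [← hP_count _ ⟨ℓ, c, hc, hℓ, rfl⟩]
  congr 1
  ext n
  simp only [Finset.mem_filter, Finset.mem_univ, true_and, Set.mem_ofPred_eq]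
  exact forall_congr' fun i => hpre i (P n i) (hP_cube n i)

/-- Scrambling a `(t,m,d)`-net in base `b` by coordinatewise `b`-ary
scramblings of depth `m - t` yields again a `(t,m,d)`-net in base `b`. -/
theorem stmt9 (b d m t : ℕ) (hb : 2 ≤ b) (hd : 2 ≤ d) (ht : t ≤ m)
    (P : Fin (b ^ m) → Fin d → ℝ) (hP : IsNet b d m t P)
    (σ : Fin d → ℝ → ℝ) (hσ : ∀ i, IsScrambling b (m - t) (σ i)) :
    IsNet b d m t (fun n i => σ i (P n i)) :=
  stmt9_general b d m t P hP σ hσ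

end LHSPaper
end

section
/- Let P = (p^{(1)}, p^{(2)}, p^{(3)}, p^{(4)}) be a (0,2,3)-net in base 2 such that p^{(4)} ∈ [3/4, 1)^3. Then each of the points p^{(1)}, p^{(2)}, p^{(3)} has exactly one coordinate entry in [1/2, 3/4) and its other two coordinate entries in [0, 1/2). -/
open MeasureTheory ProbabilityTheory Filter
open scoped ENNReal Classical

namespace LHSPaper

/-! In a `(0,2,d)`-net in base `2` every order-`2` box holds exactly one point. The corner point
`p⁽⁴⁾ ∈ [3/4,1)³` occupies the slabs `{x_j ∈ [3/4,1)}` and the quadrants `{x_j, x_j' ≥ 1/2}`,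
so every other point has all coordinates below `3/4` and at most one of them at least `1/2`.
If some other point had all coordinates below `1/2`, it would share the quadrant
`{x_0, x_1 < 1/2}` with the point of the slab `{x_2 ∈ [1/2,3/4)}`. -/

section

variable {b d m : ℕ} {P : Fin (b ^ m) → Fin d → ℝ}

theorem IsNet.existsUnique_mem_elemInterval (hP : IsNet b d m 0 P) (ℓ a : Fin d → ℕ)
    (ha : ∀ i, a i < b ^ ℓ i) (hℓ : ∑ i, ℓ i = m) :
    ∃! n, ∀ i, P n i ∈ Set.Ico ((a i : ℝ) / b ^ ℓ i) (((a i : ℝ) + 1) / b ^ ℓ i) := by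
  rw [Fintype.existsUnique_iff_card_one]
  simpa using hP.2 _ ⟨ℓ, a, ha, by rwa [Nat.sub_zero], rfl⟩

theorem IsNet.existsUnique_coord_mem (hP : IsNet b d m 0 P) (j : Fin d) {a : ℕ}
    (ha : a < b ^ m) :
    ∃! n, P n j ∈ Set.Ico ((a : ℝ) / b ^ m) (((a : ℝ) + 1) / b ^ m) := by
  refine (existsUnique_congr fun n => ?_).1 <| hP.existsUnique_mem_elemInterval
    (Pi.single j m) (Pi.single j a) (fun i => ?_) (by simp)
  · refine ⟨fun h => by simpa using h j, fun h i => ?_⟩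
    rcases eq_or_ne i j with rfl | hij
    · simpa using h
    · simpa [hij] using hP.1 n i
  · rcases eq_or_ne i j with rfl | hij
    · simpa using ha
    · simp [hij]

theorem IsNet.existsUnique_two_coord_mem (hP : IsNet b d m 0 P) {j j' : Fin d} (hjj' : j ≠ j')
    {k a a' : ℕ} (hk : k ≤ m) (ha : a < b ^ k) (ha' : a' < b ^ (m - k)) :
    ∃! n, P n j ∈ Set.Ico ((a : ℝ) / b ^ k) (((a : ℝ) + 1) / b ^ k) ∧
      P n j' ∈ Set.Ico ((a' : ℝ) / b ^ (m - k)) (((a' : ℝ) + 1) / b ^ (m - k)) := by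
  refine (existsUnique_congr fun n => ?_).1 <| hP.existsUnique_mem_elemInterval
    (Pi.single j k + Pi.single j' (m - k)) (Pi.single j a + Pi.single j' a') (fun i => ?_)
    (by simp [Finset.sum_add_distrib]; omega)
  · refine ⟨fun h => ⟨by simpa [hjj'] using h j, by simpa [hjj'.symm] using h j'⟩,
      fun h i => ?_⟩
    rcases eq_or_ne i j with rfl | hij
    · simpa [hjj'] using h.1
    rcases eq_or_ne i j' with rfl | hij'
    · simpa [hij] using h.2
    · simpa [hij, hij'] using hP.1 n i
  · rcases eq_or_ne i j with rfl | hij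
    · simpa [hjj'] using ha
    rcases eq_or_ne i j' with rfl | hij'
    · simpa [hij] using ha'
    · simp [hij, hij']

end

section

variable {d : ℕ} {P : Fin (2 ^ 2) → Fin d → ℝ} {n n' : Fin (2 ^ 2)}

theorem IsNet.eq_of_three_quarters_le (hP : IsNet 2 d 2 0 P) {j : Fin d}
    (hn : 3 / 4 ≤ P n j) (hn' : 3 / 4 ≤ P n' j) : n = n' := by
  refine (hP.existsUnique_coord_mem j (a := 3) (by norm_num)).unique ?_ ?_ <;>
    norm_num
  exacts [⟨hn, (hP.1 n j).2⟩, ⟨hn', (hP.1 n' j).2⟩]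

theorem IsNet.exists_coord_mem_Ico_half_three_quarters (hP : IsNet 2 d 2 0 P) (j : Fin d) :
    ∃ n, P n j ∈ Set.Ico (1 / 2 : ℝ) (3 / 4) := by
  obtain ⟨n, hn, -⟩ := hP.existsUnique_coord_mem j (a := 2) (by norm_num)
  exact ⟨n, by norm_num at hn; exact hn⟩

theorem IsNet.eq_of_half_le_of_half_le (hP : IsNet 2 d 2 0 P) {j j' : Fin d} (hjj' : j ≠ j')
    (hn : 1 / 2 ≤ P n j ∧ 1 / 2 ≤ P n j') (hn' : 1 / 2 ≤ P n' j ∧ 1 / 2 ≤ P n' j') :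
    n = n' := by
  refine (hP.existsUnique_two_coord_mem hjj' (k := 1) (a := 1) (a' := 1) (by norm_num)
    (by norm_num) (by norm_num)).unique ?_ ?_ <;> norm_num
  exacts [⟨⟨hn.1, (hP.1 n j).2⟩, hn.2, (hP.1 n j').2⟩,
    ⟨⟨hn'.1, (hP.1 n' j).2⟩, hn'.2, (hP.1 n' j').2⟩]

theorem IsNet.eq_of_lt_half_of_lt_half (hP : IsNet 2 d 2 0 P) {j j' : Fin d} (hjj' : j ≠ j')
    (hn : P n j < 1 / 2 ∧ P n j' < 1 / 2) (hn' : P n' j < 1 / 2 ∧ P n' j' < 1 / 2) :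
    n = n' := by
  refine (hP.existsUnique_two_coord_mem hjj' (k := 1) (a := 0) (a' := 0) (by norm_num)
    (by norm_num) (by norm_num)).unique ?_ ?_ <;> norm_num
  exacts [⟨⟨(hP.1 n j).1, hn.1⟩, (hP.1 n j').1, hn.2⟩,
    ⟨⟨(hP.1 n' j).1, hn'.1⟩, (hP.1 n' j').1, hn'.2⟩]

end

/-- In a `(0,2,3)`-net in base `2` whose fourth point lies in `[3/4,1)^3`,
each of the other three points has exactly one coordinate in `[1/2,3/4)` and its other
two coordinates in `[0,1/2)`. -/
theorem stmt15 (P : Fin (2 ^ 2) → Fin 3 → ℝ) (hP : IsNet 2 3 2 0 P)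
    (h4 : ∀ n : Fin (2 ^ 2), (n : ℕ) = 3 → ∀ j, P n j ∈ Set.Ico (3 / 4 : ℝ) 1) :
    ∀ n : Fin (2 ^ 2), (n : ℕ) < 3 →
      ∃ j, P n j ∈ Set.Ico (1 / 2 : ℝ) (3 / 4) ∧
        ∀ j', j' ≠ j → P n j' ∈ Set.Ico (0 : ℝ) (1 / 2) := by
  have hq : ∀ j, 3 / 4 ≤ P 3 j := fun j => (h4 3 rfl j).1
  have hlt : ∀ n ≠ 3, ∀ j, P n j < 3 / 4 := fun n hn j =>
    not_le.1 fun h => hn (hP.eq_of_three_quarters_le h (hq j))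
  have hpair : ∀ n ≠ 3, ∀ j j', j ≠ j' → 1 / 2 ≤ P n j → P n j' < 1 / 2 :=
    fun n hn j j' hjj' hj => not_le.1 fun hj' => hn <|
      hP.eq_of_half_le_of_half_le hjj' ⟨hj, hj'⟩ ⟨by linarith [hq j], by linarith [hq j']⟩
  intro n hn
  have hn3 : n ≠ 3 := Fin.ne_of_val_ne (by simp; omega)
  by_cases hhalf : ∃ j, 1 / 2 ≤ P n j
  · obtain ⟨j, hj⟩ := hhalf
    exact ⟨j, ⟨hj, hlt n hn3 j⟩, fun j' hj' => ⟨(hP.1 n j').1, hpair n hn3 j j' hj'.symm hj⟩⟩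
  simp only [not_exists, not_le] at hhalf
  obtain ⟨m, hm⟩ := hP.exists_coord_mem_Ico_half_three_quarters 2
  have hm3 : m ≠ 3 := by rintro rfl; linarith [hq 2, hm.2]
  have hnm : n = m := hP.eq_of_lt_half_of_lt_half (j := 0) (j' := 1) (by decide)
    ⟨hhalf 0, hhalf 1⟩ ⟨hpair m hm3 2 0 (by decide) hm.1, hpair m hm3 2 1 (by decide) hm.1⟩
  exact absurd (hnm ▸ hm.1) (hhalf 2).not_ge

end LHSPaper
end
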